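/- arXiv:1306.5842 — 5 statements merged into one kernel-verified Lean document; each statement's English description precedes it below -/
import Mathlib

section
/- For d ≥ 5 and ξ a primitive (d²−3d+3)-rd root of unity, the transformations σ = [ξ^{-(d-2)}X, ξY, Z] and τ = [Y, Z, X] both preserve the polynomial XY^{d-1} + YZ^{d-1} + ZX^{d-1} up to a nonzero scalar, and the group they generate in PGL(3,ℂ) has order 3(d²−3d+3). -/
open MvPolynomial Matrix

/-- Action of a `3×3` matrix on polynomials by linear substitution of coordinates. -/
noncomputable def actOn (M : Matrix (Fin 3) (Fin 3) ℂ) (F : MvPolynomial (Fin 3) ℂ) :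
    MvPolynomial (Fin 3) ℂ :=
  MvPolynomial.bind₁ (fun i => ∑ j, MvPolynomial.C (M i j) * MvPolynomial.X j) F

/-- `PGL(3, ℂ)`. -/
abbrev PGL3 := GL (Fin 3) ℂ ⧸ Subgroup.center (GL (Fin 3) ℂ)

noncomputable def toPGL3 : GL (Fin 3) ℂ →* PGL3 := QuotientGroup.mk' _

/-! Write `d = e + 2`, so that `d² - 3d + 3 = e² + e + 1`. The relation `ξ ^ (e² + e + 1) = 1`
is exactly what makes `σ` multiply each monomial of the Klein polynomial by `ξ`, and what makes
`τ σ τ⁻¹ = σ ^ e` in `PGL(3, ℂ)` (the matrices differ by the scalar `ξ ^ (-e)`). Hence `τ` normalizes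
`⟨σ⟩`, and the group generated is `⟨σ⟩ ⟨τ⟩`. The two cyclic factors meet trivially: every power
of `σ` is the class of a diagonal matrix with `(2, 2)` entry `1`, whereas `τ` and `τ²` are classes
of permutation matrices with `(2, 2)` entry `0`, and proportional matrices have the same zero
entries. So the order is `ord σ · ord τ = (e² + e + 1) · 3`. -/

namespace Subgroup

variable {G : Type*} [Group G]

theorem card_sup_of_le_normalizer_of_disjoint {H K : Subgroup G} (hle : K ≤ normalizer H)
    (hdisj : Disjoint H K) : Nat.card ↥(H ⊔ K) = Nat.card H * Nat.card K := by
  have hrange : ((H ⊔ K : Subgroup G) : Set G) = Set.range fun g : H × K => (g.1 : G) * g.2 := by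
    rw [coe_mul_of_right_le_normalizer_left H K hle]
    ext x
    simp [Set.mem_mul]
  rw [← Nat.card_prod, ← Nat.card_range_of_injective (mul_injective_of_disjoint hdisj)]
  exact Nat.card_congr (Equiv.setCongr hrange)

theorem card_closure_pair_of_conj_mem_zpowers {σ τ : G} (hσ : IsOfFinOrder σ)
    (hconj : τ * σ * τ⁻¹ ∈ zpowers σ) (hdisj : Disjoint (zpowers σ) (zpowers τ)) :
    Nat.card (closure {σ, τ}) = orderOf σ * orderOf τ := by
  have hnorm : zpowers τ ≤ normalizer (zpowers σ : Set G) := by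
    have : Finite (zpowers σ : Set G) := (finite_zpowers.2 hσ).to_subtype
    refine zpowers_le.2 (mem_normalizer_fintype fun x hx => ?_)
    obtain ⟨k, rfl⟩ := mem_zpowers_iff.1 hx
    rw [← conj_zpow]
    exact zpow_mem hconj k
  rw [Set.insert_eq, closure_union, ← zpowers_eq_closure, ← zpowers_eq_closure,
    card_sup_of_le_normalizer_of_disjoint hnorm hdisj, Nat.card_zpowers, Nat.card_zpowers]

end Subgroup

theorem inv_pow_pow_succ_eq_self {α : Type*} [DivisionMonoid α] {x : α} {e : ℕ}
    (h : x ^ (e ^ 2 + e + 1) = 1) : (x⁻¹ ^ e) ^ (e + 1) = x := by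
  rw [← pow_mul, inv_pow, inv_eq_iff_eq_inv]
  exact eq_inv_of_mul_eq_one_left (by rw [← pow_succ, ← h]; ring_nf)

noncomputable def kleinPoly (m : ℕ) : MvPolynomial (Fin 3) ℂ :=
  X 0 * X 1 ^ m + X 1 * X 2 ^ m + X 2 * X 0 ^ m

def cycleMatrix : Matrix (Fin 3) (Fin 3) ℂ := !![0, 1, 0; 0, 0, 1; 1, 0, 0]

theorem actOn_kleinPoly (M : Matrix (Fin 3) (Fin 3) ℂ) (m : ℕ) :
    actOn M (kleinPoly m) = actOn M (X 0) * actOn M (X 1) ^ m + actOn M (X 1) * actOn M (X 2) ^ m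
      + actOn M (X 2) * actOn M (X 0) ^ m := by
  simp only [actOn, kleinPoly, map_add, map_mul, map_pow]

theorem actOn_diagonal_X (v : Fin 3 → ℂ) (i : Fin 3) :
    actOn (diagonal v) (X i) = C (v i) * X i := by
  simp [actOn, diagonal_apply, apply_ite C, ite_mul]

theorem actOn_diagonal_kleinPoly {a b c l : ℂ} (m : ℕ) (h₀ : a * b ^ m = l) (h₁ : b * c ^ m = l)
    (h₂ : c * a ^ m = l) : actOn (diagonal ![a, b, c]) (kleinPoly m) = C l * kleinPoly m := by
  have hC {x y : ℂ} (hxy : x * y ^ m = l) : C x * C y ^ m = (C l : MvPolynomial (Fin 3) ℂ) := by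
    rw [← map_pow, ← map_mul, hxy]
  rw [actOn_kleinPoly]
  simp only [actOn_diagonal_X, kleinPoly, mul_pow, cons_val_zero, cons_val_one, cons_val_two,
    head_cons, tail_cons]
  linear_combination (X 0 * X 1 ^ m) * hC h₀ + (X 1 * X 2 ^ m) * hC h₁ + (X 2 * X 0 ^ m) * hC h₂

theorem actOn_cycleMatrix_kleinPoly (m : ℕ) : actOn cycleMatrix (kleinPoly m) = kleinPoly m := by
  simp [actOn, cycleMatrix, kleinPoly, Fin.sum_univ_three]
  ring

theorem cycleMatrix_pow_three : cycleMatrix ^ 3 = 1 := by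
  ext i j
  fin_cases i <;> fin_cases j <;> simp [cycleMatrix, pow_succ, mul_apply, Fin.sum_univ_three]

theorem cycleMatrix_mul_diagonal (a b c : ℂ) :
    cycleMatrix * diagonal ![a, b, c] = diagonal ![b, c, a] * cycleMatrix := by
  ext i j
  fin_cases i <;> fin_cases j <;> simp [cycleMatrix, mul_apply, Fin.sum_univ_three]

theorem cycleMatrix_pow_apply_two_two {k : ℕ} (hk₀ : 0 < k) (hk : k < 3) :
    (cycleMatrix ^ k) 2 2 = 0 := by
  interval_cases k <;> simp [cycleMatrix, pow_succ, mul_apply, Fin.sum_univ_three]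

theorem toPGL3_eq_one_iff {g : GL (Fin 3) ℂ} :
    toPGL3 g = 1 ↔ (g : Matrix (Fin 3) (Fin 3) ℂ) ∈ Set.range (scalar (Fin 3)) := by
  rw [toPGL3, QuotientGroup.mk'_apply, QuotientGroup.eq_one_iff,
    GeneralLinearGroup.mem_center_iff_val_mem_range_scalar]

theorem toPGL3_eq_of_val_eq_smul {g h : GL (Fin 3) ℂ} {c : ℂ}
    (hgh : (g : Matrix (Fin 3) (Fin 3) ℂ) = c • (h : Matrix (Fin 3) (Fin 3) ℂ)) :
    toPGL3 g = toPGL3 h := by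
  rw [← mul_inv_eq_one, ← map_inv, ← map_mul, toPGL3_eq_one_iff]
  refine ⟨c, ?_⟩
  rw [Units.val_mul, hgh, smul_mul_assoc, Units.mul_inv, scalar_apply, smul_one_eq_diagonal]

theorem apply_eq_zero_of_toPGL3_eq {g h : GL (Fin 3) ℂ} (hgh : toPGL3 g = toPGL3 h) {i j : Fin 3}
    (hij : (h : Matrix (Fin 3) (Fin 3) ℂ) i j = 0) : (g : Matrix (Fin 3) (Fin 3) ℂ) i j = 0 := by
  have hone : toPGL3 (g * h⁻¹) = 1 := by rw [map_mul, map_inv, hgh, mul_inv_cancel]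
  obtain ⟨c, hc⟩ := toPGL3_eq_one_iff.1 hone
  have : (g : Matrix (Fin 3) (Fin 3) ℂ) = scalar (Fin 3) c * h := by
    rw [hc, Units.val_mul, mul_assoc, Units.inv_mul, mul_one]
  rw [this, scalar_apply, diagonal_mul, hij, mul_zero]

theorem toPGL3_eq_one_iff_of_val_eq_diagonal {g : GL (Fin 3) ℂ} {v : Fin 3 → ℂ}
    (hg : (g : Matrix (Fin 3) (Fin 3) ℂ) = diagonal v) (hv : v 2 = 1) : toPGL3 g = 1 ↔ v = 1 := by
  rw [toPGL3_eq_one_iff, hg]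
  constructor
  · rintro ⟨c, hc⟩
    have hcv : (fun _ => c) = v := diagonal_injective ((scalar_apply c).symm.trans hc)
    subst hcv
    funext _
    exact hv
  · rintro rfl
    exact ⟨1, by rw [scalar_apply]; rfl⟩

theorem orderOf_toPGL3_of_val_eq_cycleMatrix {t : GL (Fin 3) ℂ}
    (ht : (t : Matrix (Fin 3) (Fin 3) ℂ) = cycleMatrix) : orderOf (toPGL3 t) = 3 := by
  have : Fact (Nat.Prime 3) := ⟨Nat.prime_three⟩
  apply orderOf_eq_prime
  · rw [← map_pow, ← map_one toPGL3]
    congr 1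
    ext1
    rw [Units.val_pow_eq_pow_val, ht, cycleMatrix_pow_three, Units.val_one]
  · intro h
    have h22 := apply_eq_zero_of_toPGL3_eq (h.trans (map_one toPGL3).symm).symm (i := 2) (j := 2)
      (by rw [ht, ← pow_one cycleMatrix]; exact cycleMatrix_pow_apply_two_two one_pos (by norm_num))
    simp at h22

section KleinGroup

variable {e : ℕ} {ξ : ℂ} {s t : GL (Fin 3) ℂ}

theorem orderOf_toPGL3_of_val_eq_diagonal (hξ : IsPrimitiveRoot ξ (e ^ 2 + e + 1))
    (hs : (s : Matrix (Fin 3) (Fin 3) ℂ) = diagonal ![ξ⁻¹ ^ e, ξ, 1]) :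
    orderOf (toPGL3 s) = e ^ 2 + e + 1 := by
  rw [hξ.eq_orderOf, orderOf_eq_orderOf_iff]
  intro k
  rw [← map_pow, toPGL3_eq_one_iff_of_val_eq_diagonal
    (by rw [Units.val_pow_eq_pow_val, hs, diagonal_pow]) (by simp)]
  constructor
  · intro h
    simpa using congrFun h 1
  · intro h
    funext i
    fin_cases i <;> simp [h, inv_pow, pow_right_comm _ e k]

theorem toPGL3_conj_eq_pow (hξ : ξ ^ (e ^ 2 + e + 1) = 1)
    (hs : (s : Matrix (Fin 3) (Fin 3) ℂ) = diagonal ![ξ⁻¹ ^ e, ξ, 1])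
    (ht : (t : Matrix (Fin 3) (Fin 3) ℂ) = cycleMatrix) :
    toPGL3 t * toPGL3 s * (toPGL3 t)⁻¹ = toPGL3 s ^ e := by
  have hξ₀ : ξ ≠ 0 := by rintro rfl; simp at hξ
  rw [mul_inv_eq_iff_eq_mul, ← map_mul, ← map_pow, ← map_mul]
  apply toPGL3_eq_of_val_eq_smul (c := ξ⁻¹ ^ e)
  rw [Units.val_mul, Units.val_mul, Units.val_pow_eq_pow_val, hs, ht, cycleMatrix_mul_diagonal,
    diagonal_pow, ← smul_mul_assoc, ← diagonal_smul]
  congr 2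
  funext i
  fin_cases i
  · simpa [pow_succ'] using (inv_pow_pow_succ_eq_self hξ).symm
  · simp [hξ₀]
  · simp

theorem disjoint_zpowers_toPGL3_of_val_eq_diagonal {v : Fin 3 → ℂ}
    (hs : (s : Matrix (Fin 3) (Fin 3) ℂ) = diagonal v) (hv : v 2 = 1)
    (ht : (t : Matrix (Fin 3) (Fin 3) ℂ) = cycleMatrix) (hσ : IsOfFinOrder (toPGL3 s)) :
    Disjoint (Subgroup.zpowers (toPGL3 s)) (Subgroup.zpowers (toPGL3 t)) := by
  have hτ := orderOf_toPGL3_of_val_eq_cycleMatrix ht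
  rw [Subgroup.disjoint_def]
  intro x hxσ hxτ
  obtain ⟨a, rfl : toPGL3 s ^ a = x⟩ := hσ.mem_powers_iff_mem_zpowers.2 hxσ
  obtain ⟨b, hb : toPGL3 t ^ b = toPGL3 s ^ a⟩ :=
    (orderOf_pos_iff.1 (by rw [hτ]; norm_num)).mem_powers_iff_mem_zpowers.2 hxτ
  rw [← pow_mod_orderOf, hτ] at hb
  rcases (b % 3).eq_zero_or_pos with h0 | hpos
  · rw [← hb, h0, pow_zero]
  · exfalso
    rw [← map_pow, ← map_pow] at hb
    have h22 := apply_eq_zero_of_toPGL3_eq hb.symm (i := 2) (j := 2) (by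
      rw [Units.val_pow_eq_pow_val, ht]
      exact cycleMatrix_pow_apply_two_two hpos (Nat.mod_lt _ three_pos))
    rw [Units.val_pow_eq_pow_val, hs, diagonal_pow, diagonal_apply_eq, Pi.pow_apply, hv,
      one_pow] at h22
    exact one_ne_zero h22

end KleinGroup

/-- For `d ≥ 5` and `ξ` a primitive `(d²-3d+3)`-rd root of unity, the transformations
`σ = [ξ^{-(d-2)}X, ξY, Z]` and `τ = [Y, Z, X]` preserve the Klein polynomial
`XY^{d-1} + YZ^{d-1} + ZX^{d-1}` up to a nonzero scalar, and generate a subgroup of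
`PGL(3,ℂ)` of order `3(d²-3d+3)`. -/
theorem klein_group_order (d : ℕ) (hd : 5 ≤ d) (ξ : ℂ)
    (hξ : IsPrimitiveRoot ξ (d ^ 2 - 3 * d + 3))
    (s t : GL (Fin 3) ℂ)
    (hs : (s : Matrix (Fin 3) (Fin 3) ℂ) = !![ξ⁻¹ ^ (d - 2), 0, 0; 0, ξ, 0; 0, 0, 1])
    (ht : (t : Matrix (Fin 3) (Fin 3) ℂ) = !![0, 1, 0; 0, 0, 1; 1, 0, 0]) :
    (∀ M ∈ ({(s : Matrix (Fin 3) (Fin 3) ℂ), (t : Matrix (Fin 3) (Fin 3) ℂ)} :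
        Set (Matrix (Fin 3) (Fin 3) ℂ)),
      ∃ c : ℂ, c ≠ 0 ∧
        actOn M (X 0 * X 1 ^ (d - 1) + X 1 * X 2 ^ (d - 1) + X 2 * X 0 ^ (d - 1)) =
          MvPolynomial.C c *
            (X 0 * X 1 ^ (d - 1) + X 1 * X 2 ^ (d - 1) + X 2 * X 0 ^ (d - 1))) ∧
      Nat.card (Subgroup.closure {toPGL3 s, toPGL3 t} : Subgroup PGL3)
        = 3 * (d ^ 2 - 3 * d + 3) := by
  obtain ⟨e, rfl⟩ : ∃ e, d = e + 2 := ⟨d - 2, by omega⟩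
  have hn : (e + 2) ^ 2 - 3 * (e + 2) + 3 = e ^ 2 + e + 1 := by
    have : 3 * (e + 2) ≤ (e + 2) ^ 2 := by nlinarith
    zify [this]
    ring
  rw [hn] at hξ ⊢
  have hs' : (s : Matrix (Fin 3) (Fin 3) ℂ) = diagonal ![ξ⁻¹ ^ e, ξ, 1] :=
    hs.trans (by ext i j; fin_cases i <;> fin_cases j <;> rfl)
  have hσ := orderOf_toPGL3_of_val_eq_diagonal hξ hs'
  have hξ₀ : ξ ≠ 0 := hξ.ne_zero (by omega)
  refine ⟨?_, ?_⟩
  · rintro M (rfl | rfl)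
    · refine ⟨ξ, hξ₀, ?_⟩
      rw [hs']
      exact actOn_diagonal_kleinPoly (e + 1)
        (by rw [pow_succ, ← mul_assoc, inv_pow, inv_mul_cancel₀ (pow_ne_zero _ hξ₀), one_mul])
        (by rw [one_pow, mul_one]) ((one_mul _).trans (inv_pow_pow_succ_eq_self hξ.pow_eq_one))
    · exact ⟨1, one_ne_zero, by rw [ht, map_one, one_mul]; exact actOn_cycleMatrix_kleinPoly _⟩
  · have hfin : IsOfFinOrder (toPGL3 s) := orderOf_pos_iff.1 (by omega)
    have hconj : toPGL3 t * toPGL3 s * (toPGL3 t)⁻¹ ∈ Subgroup.zpowers (toPGL3 s) := by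
      rw [toPGL3_conj_eq_pow hξ.pow_eq_one hs' ht]
      exact Subgroup.pow_mem _ (Subgroup.mem_zpowers _) e
    rw [Subgroup.card_closure_pair_of_conj_mem_zpowers hfin hconj
      (disjoint_zpowers_toPGL3_of_val_eq_diagonal hs' rfl ht hfin),
      hσ, orderOf_toPGL3_of_val_eq_cycleMatrix ht, mul_comm]
end

section
/- For d ≥ 5 with ζ_d a primitive d-th root of unity and ζ_{d-1} a primitive (d−1)-st root of unity, the two projective transformations [ζ_d X, Y, Z] and [X, Y, ζ_{d-1} Z] preserve the curve YZ^{d-1} + X^d + Y^d = 0 and generate a cyclic group of order d(d−1) in PGL(3,ℂ). -/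
open MvPolynomial Matrix

/-! Both matrices are diagonal, so they scale each monomial of
`Y Z^{d-1} + X^d + Y^d` by a `d`-th resp. `(d-1)`-st power of a root of unity, i.e. by `1`.
A diagonal matrix is central exactly when it is scalar, so the classes of `a` and `b` in
`PGL(3, ℂ)` have orders `d` and `d - 1`. They commute and these orders are coprime, so the
group they generate is generated by their product, whose order is `d (d - 1)`. -/

namespace Commute

variable {G : Type*} [Group G] {a b : G}

theorem mem_zpowers_mul_of_coprime (hab : Commute a b)
    (hco : (orderOf a).Coprime (orderOf b)) : a ∈ Subgroup.zpowers (a * b) := by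
  obtain ⟨m, hm⟩ := exists_pow_eq_self_of_coprime (x := a) hco.symm
  have hpow : (a * b) ^ orderOf b = a ^ orderOf b := by
    rw [hab.mul_pow, pow_orderOf_eq_one, mul_one]
  have hmem := Subgroup.pow_mem _ (Subgroup.npow_mem_zpowers (a * b) (orderOf b)) m
  rwa [hpow, hm] at hmem

theorem closure_pair_eq_zpowers_mul_of_coprime (hab : Commute a b)
    (hco : (orderOf a).Coprime (orderOf b)) :
    Subgroup.closure {a, b} = Subgroup.zpowers (a * b) := by
  refine le_antisymm ((Subgroup.closure_le _).mpr ?_) (Subgroup.zpowers_le.mpr ?_)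
  · rintro x (rfl | rfl)
    · exact hab.mem_zpowers_mul_of_coprime hco
    · rw [hab.eq]
      exact hab.symm.mem_zpowers_mul_of_coprime hco.symm
  · exact Subgroup.mul_mem _ (Subgroup.subset_closure (Set.mem_insert _ _))
      (Subgroup.subset_closure (Set.mem_insert_of_mem _ rfl))

end Commute

theorem Matrix.GeneralLinearGroup.mem_center_iff_of_val_eq_diagonal {n R : Type*} [Fintype n]
    [DecidableEq n] [CommRing R] {u : GL n R} {v : n → R}
    (hu : (u : Matrix n n R) = diagonal v) :
    u ∈ Subgroup.center (GL n R) ↔ ∃ r, ∀ i, v i = r := by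
  rw [GeneralLinearGroup.mem_center_iff_val_mem_range_scalar, hu]
  simp only [Set.mem_range, scalar_apply, diagonal_eq_diagonal_iff, eq_comm]

theorem toPGL3_pow_eq_one_iff {u : GL (Fin 3) ℂ} {s t : ℂ}
    (hu : (u : Matrix (Fin 3) (Fin 3) ℂ) = !![s, 0, 0; 0, 1, 0; 0, 0, t]) (k : ℕ) :
    toPGL3 u ^ k = 1 ↔ s ^ k = 1 ∧ t ^ k = 1 := by
  have huk : ((u ^ k : GL (Fin 3) ℂ) : Matrix (Fin 3) (Fin 3) ℂ) =
      diagonal ![s ^ k, 1, t ^ k] := by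
    rw [Units.val_pow_eq_pow_val, hu, ← diagonal_vec3, diagonal_pow]
    congr 1
    ext i; fin_cases i <;> simp
  rw [← map_pow, toPGL3, QuotientGroup.mk'_apply, QuotientGroup.eq_one_iff,
    GeneralLinearGroup.mem_center_iff_of_val_eq_diagonal huk]
  simp +contextual [Fin.forall_fin_succ, eq_comm]

theorem actOn_diagonal_curve {d : ℕ} {s t : ℂ} (hs : s ^ d = 1) (ht : t ^ (d - 1) = 1) :
    actOn !![s, 0, 0; 0, 1, 0; 0, 0, t] (X 1 * X 2 ^ (d - 1) + X 0 ^ d + X 1 ^ d) =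
      X 1 * X 2 ^ (d - 1) + X 0 ^ d + X 1 ^ d := by
  simp [actOn, Fin.sum_univ_three, mul_pow, ← C_pow, hs, ht]

/-- For `d ≥ 5`, `ζ_d` a primitive `d`-th and `ζ_{d-1}` a primitive `(d-1)`-st root of unity,
the transformations `[ζ_d X, Y, Z]` and `[X, Y, ζ_{d-1} Z]` preserve the curve
`YZ^{d-1} + X^d + Y^d = 0` and generate a cyclic group of order `d(d-1)` in `PGL(3,ℂ)`. -/
theorem Fdd1_automorphisms (d : ℕ) (hd : 5 ≤ d) (ζd ζd1 : ℂ)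
    (hζd : IsPrimitiveRoot ζd d) (hζd1 : IsPrimitiveRoot ζd1 (d - 1))
    (a b : GL (Fin 3) ℂ)
    (ha : (a : Matrix (Fin 3) (Fin 3) ℂ) = !![ζd, 0, 0; 0, 1, 0; 0, 0, 1])
    (hb : (b : Matrix (Fin 3) (Fin 3) ℂ) = !![1, 0, 0; 0, 1, 0; 0, 0, ζd1]) :
    (∀ M ∈ ({(a : Matrix (Fin 3) (Fin 3) ℂ), (b : Matrix (Fin 3) (Fin 3) ℂ)} :
        Set (Matrix (Fin 3) (Fin 3) ℂ)),
      ∃ c : ℂ, c ≠ 0 ∧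
        actOn M (X 1 * X 2 ^ (d - 1) + X 0 ^ d + X 1 ^ d) =
          MvPolynomial.C c * (X 1 * X 2 ^ (d - 1) + X 0 ^ d + X 1 ^ d)) ∧
      IsCyclic (Subgroup.closure {toPGL3 a, toPGL3 b} : Subgroup PGL3) ∧
      Nat.card (Subgroup.closure {toPGL3 a, toPGL3 b} : Subgroup PGL3) = d * (d - 1) := by
  have ord_a : orderOf (toPGL3 a) = d := by
    rw [hζd.eq_orderOf, orderOf_eq_orderOf_iff]
    simp [toPGL3_pow_eq_one_iff ha]
  have ord_b : orderOf (toPGL3 b) = d - 1 := by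
    rw [hζd1.eq_orderOf, orderOf_eq_orderOf_iff]
    simp [toPGL3_pow_eq_one_iff hb]
  have hab : Commute (toPGL3 a) (toPGL3 b) := by
    refine Commute.map (Units.ext ?_) toPGL3
    simp only [Units.val_mul, ha, hb, ← diagonal_vec3, diagonal_mul_diagonal]
    exact congrArg diagonal (funext fun i => mul_comm _ _)
  have hco : (orderOf (toPGL3 a)).Coprime (orderOf (toPGL3 b)) := by
    rw [ord_a, ord_b, Nat.coprime_self_sub_right (by omega)]
    exact Nat.coprime_one_right d
  rw [hab.closure_pair_eq_zpowers_mul_of_coprime hco, Nat.card_zpowers,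
    hab.orderOf_mul_eq_mul_orderOf_of_coprime hco, ord_a, ord_b]
  refine ⟨?_, inferInstance, rfl⟩
  rintro M (rfl | rfl)
  · refine ⟨1, one_ne_zero, ?_⟩
    rw [ha, actOn_diagonal_curve hζd.pow_eq_one (one_pow _), C_1, one_mul]
  · refine ⟨1, one_ne_zero, ?_⟩
    rw [hb, actOn_diagonal_curve (one_pow _) hζd1.pow_eq_one, C_1, one_mul]
end

section
/- Let d ≥ 5 and let ξ be a primitive (d²−3d+3)-rd root of unity. Suppose i, j, k are nonnegative integers with i + j + k = d, each at most d−2, and ξ^{(d-2)i − j + 1} = 1. Then there are no such (i,j,k); equivalently, the only solution of (d−2)i − j + 1 ≡ 0 (mod d²−3d+3) with 0 ≤ i,j,k and i+j+k = d has (i,j,k) = (0,1,d−1), which violates the bound k ≤ d−2. -/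
/-!
Since `ξ` is a primitive root of order `n = d² - 3d + 3`, the hypothesis says `n ∣ (d-2)i - j + 1`.
The bounds on `i` and `j` confine this integer to the open interval `(-n, n)`, so it vanishes:
`j = (d-2)i + 1`. As `j ≤ d - 2`, this forces `i = 0` and `j = 1`, hence `k = d - 1`,
contradicting `k ≤ d - 2`.
-/

/-- With truncated subtraction this holds for every `d`: for `d ≤ 2` it reads `1 < 3`. -/
lemma sub_two_mul_sub_two_add_one_lt (d : ℕ) : (d - 2) * (d - 2) + 1 < d ^ 2 - 3 * d + 3 := by
  rcases lt_or_ge d 3 with hd | hd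
  · interval_cases d <;> decide
  · obtain ⟨e, rfl⟩ := Nat.exists_eq_add_of_le hd
    have hsq : (3 + e) ^ 2 - 3 * (3 + e) = e * e + 3 * e := by
      rw [Nat.sub_eq_iff_eq_add (by nlinarith)]; ring
    rw [hsq, show 3 + e - 2 = e + 1 by omega]
    nlinarith

lemma abs_mul_sub_add_one_lt {e i j n : ℕ} (hi : i ≤ e) (hj : j ≤ e) (hn : e * e + 1 < n) :
    |(e * i - j + 1 : ℤ)| < n := by
  have hei : e * i ≤ e * e := Nat.mul_le_mul_left e hi
  have hee : e ≤ e * e + 1 := by nlinarith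
  rw [abs_lt]
  constructor <;> omega

lemma eq_zero_and_eq_one_of_mul_sub_add_one_eq_zero {e i j : ℕ} (h : (e * i - j + 1 : ℤ) = 0)
    (hj : j ≤ e) : i = 0 ∧ j = 1 := by
  have hj' : e * i + 1 = j := by omega
  rcases Nat.eq_zero_or_pos i with rfl | hpos
  · omega
  · nlinarith

theorem klein_low_terms_general (d : ℕ) (ξ : ℂ)
    (hξ : IsPrimitiveRoot ξ (d ^ 2 - 3 * d + 3))
    (i j k : ℕ) (hsum : i + j + k = d)
    (hi : i ≤ d - 2) (hj : j ≤ d - 2) (hk : k ≤ d - 2)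
    (hpow : ξ ^ (((d - 2 : ℕ) : ℤ) * i - j + 1) = 1) :
    False := by
  have hdvd := (hξ.zpow_eq_one_iff_dvd _).mp hpow
  have hzero := Int.eq_zero_of_abs_lt_dvd hdvd
    (abs_mul_sub_add_one_lt hi hj (sub_two_mul_sub_two_add_one_lt d))
  obtain ⟨rfl, rfl⟩ := eq_zero_and_eq_one_of_mul_sub_add_one_eq_zero hzero hj
  omega

/-- Arithmetic core of the uniqueness of the Klein curve: for `d ≥ 5` and `ξ` a primitive
`(d²-3d+3)`-rd root of unity, there are no nonnegative integers `i, j, k` with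
`i + j + k = d`, `i, j, k ≤ d - 2` and `ξ^{(d-2)i - j + 1} = 1`. -/
theorem klein_low_terms (d : ℕ) (hd : 5 ≤ d) (ξ : ℂ)
    (hξ : IsPrimitiveRoot ξ (d ^ 2 - 3 * d + 3))
    (i j k : ℕ) (hsum : i + j + k = d)
    (hi : i ≤ d - 2) (hj : j ≤ d - 2) (hk : k ≤ d - 2)
    (hpow : ξ ^ (((d - 2 : ℕ) : ℤ) * i - j + 1) = 1) :
    False :=
  klein_low_terms_general d ξ hξ i j k hsum hi hj hk hpow
end

section
/- Let d = 2m with m ≥ 4 and λ ∈ ℂ with λ ∉ {0, −1, 2, −2}. Then the curve X^{2m} + Y^{2m} + Z^{2m} + λ(X^m Y^m + Y^m Z^m + Z^m X^m) = 0 is smooth, and the group generated by [ζ²X, Y, Z], [X, ζ²Y, Z], [Y,Z,X], [X,Z,Y] (ζ a primitive d-th root of unity) acts on it and has order 6m² = (3/2)d². -/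
open MvPolynomial Matrix

/-!
At a point `x`, `∂ᵢF = m xᵢ^(m-1) ((2 - λ) xᵢ^m + λ (x₀^m + x₁^m + x₂^m))`. So at a singular
point each `xᵢ^m` is `0` or satisfies a linear equation, and the nonzero ones solve a linear
system with determinant `2`, `4 - λ²` or `(2 - λ)²(2 + 2λ)`, which is nonzero for the allowed `λ`.

`F` is the pull-back of the symmetric conic `p₂ + λ e₂` under `xᵢ ↦ xᵢ^m`. It is therefore fixed
by every monomial matrix whose entries are `m`-th roots of unity, and the four generators are such
matrices for `ω = ζ²`. Modulo scalars they generate all of them: the diagonal ones come from the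
first two generators, and the permutation matrices from a `3`-cycle and an adjacent transposition.
Multiplying by a scalar lets us take the last entry to be `1`, and this representative is unique.
That leaves `3! · m²` elements.
-/

open Equiv

noncomputable def curvePoly (m : ℕ) (lam : ℂ) : MvPolynomial (Fin 3) ℂ :=
  X 0 ^ (2 * m) + X 1 ^ (2 * m) + X 2 ^ (2 * m) +
    C lam * (X 0 ^ m * X 1 ^ m + X 1 ^ m * X 2 ^ m + X 2 ^ m * X 0 ^ m)

theorem eval_pderiv_curvePoly (m : ℕ) (lam : ℂ) (p : Fin 3 → ℂ) (i : Fin 3) :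
    eval p (pderiv i (curvePoly m lam)) =
      m * p i ^ (m - 1) * ((2 - lam) * p i ^ m + lam * ∑ j, p j ^ m) := by
  obtain _ | k := m
  · simp [curvePoly]
  fin_cases i <;> simp [curvePoly, pderiv_X, Fin.sum_univ_three, mul_add, add_mul] <;> ring

theorem eq_zero_of_critical {K : Type*} [Field K] [CharZero K] {lam A B C : K}
    (h1 : lam ≠ -1) (h2 : lam ≠ 2) (h3 : lam ≠ -2)
    (hA : A = 0 ∨ (2 - lam) * A + lam * (A + B + C) = 0)
    (hB : B = 0 ∨ (2 - lam) * B + lam * (A + B + C) = 0)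
    (hC : C = 0 ∨ (2 - lam) * C + lam * (A + B + C) = 0) :
    A = 0 ∧ B = 0 ∧ C = 0 := by
  have h2' : 2 - lam ≠ 0 := sub_ne_zero.2 h2.symm
  have h4 : (2 - lam) * (2 + lam) ≠ 0 :=
    mul_ne_zero h2' fun h => h3 (by linear_combination h)
  have h6 : (2 - lam) * (2 + 2 * lam) ≠ 0 :=
    mul_ne_zero h2' fun h => h1 (by linear_combination h / 2)
  rcases hA with rfl | hA <;> rcases hB with rfl | hB <;> rcases hC with rfl | hC
  · simp
  · exact ⟨rfl, rfl, by linear_combination hC / 2⟩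
  · exact ⟨rfl, by linear_combination hB / 2, rfl⟩
  · exact ⟨rfl, mul_left_cancel₀ h4 (by linear_combination 2 * hB - lam * hC),
      mul_left_cancel₀ h4 (by linear_combination 2 * hC - lam * hB)⟩
  · exact ⟨by linear_combination hA / 2, rfl, rfl⟩
  · exact ⟨mul_left_cancel₀ h4 (by linear_combination 2 * hA - lam * hC), rfl,
      mul_left_cancel₀ h4 (by linear_combination 2 * hC - lam * hA)⟩
  · exact ⟨mul_left_cancel₀ h4 (by linear_combination 2 * hA - lam * hB),
      mul_left_cancel₀ h4 (by linear_combination 2 * hB - lam * hA), rfl⟩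
  · refine ⟨mul_left_cancel₀ h6 ?_, mul_left_cancel₀ h6 ?_, mul_left_cancel₀ h6 ?_⟩
    · linear_combination (2 + lam) * hA - lam * hB - lam * hC
    · linear_combination (2 + lam) * hB - lam * hA - lam * hC
    · linear_combination (2 + lam) * hC - lam * hA - lam * hB

theorem curvePoly_smooth {m : ℕ} (hm : m ≠ 0) {lam : ℂ}
    (h1 : lam ≠ -1) (h2 : lam ≠ 2) (h3 : lam ≠ -2) (p : Fin 3 → ℂ) (hp : p ≠ 0) :
    ∃ i, eval p (pderiv i (curvePoly m lam)) ≠ 0 := by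
  by_contra! hsing
  have hcrit : ∀ i, p i ^ m = 0 ∨ (2 - lam) * p i ^ m + lam * ∑ j, p j ^ m = 0 := by
    intro i
    have h := hsing i
    rw [eval_pderiv_curvePoly] at h
    rcases mul_eq_zero.1 h with h | h
    · exact Or.inl ((pow_eq_zero_iff hm).2 (show p i = 0 ∧ _ by simpa [hm] using h).1)
    · exact Or.inr h
  simp only [Fin.sum_univ_three] at hcrit
  obtain ⟨hx, hy, hz⟩ := eq_zero_of_critical h1 h2 h3 (hcrit 0) (hcrit 1) (hcrit 2)
  apply hp
  funext i
  fin_cases i <;> simp_all [pow_eq_zero_iff hm]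

noncomputable def conicPoly (lam : ℂ) : MvPolynomial (Fin 3) ℂ :=
  psum (Fin 3) ℂ 2 + C lam * esymm (Fin 3) ℂ 2

theorem esymm_two_fin_three {R : Type*} [CommSemiring R] :
    esymm (Fin 3) R 2 = X 0 * X 1 + X 1 * X 2 + X 2 * X 0 := by
  have hpairs : (Finset.univ : Finset (Fin 3)).powersetCard 2 = {{0, 1}, {0, 2}, {1, 2}} := by
    decide
  rw [esymm, hpairs,
    Finset.sum_insert (by decide), Finset.sum_insert (by decide), Finset.sum_singleton,
    Finset.prod_pair (by decide), Finset.prod_pair (by decide), Finset.prod_pair (by decide)]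
  ring

theorem curvePoly_eq_bind₁ (m : ℕ) (lam : ℂ) :
    curvePoly m lam = bind₁ (fun i => X i ^ m) (conicPoly lam) := by
  simp [conicPoly, curvePoly, psum, esymm_two_fin_three, Fin.sum_univ_three]
  ring

theorem conicPoly_isSymmetric (lam : ℂ) : (conicPoly lam).IsSymmetric :=
  (psum_isSymmetric _ _ 2).add ((IsSymmetric.C lam).mul (esymm_isSymmetric _ _ 2))

theorem zmodChar_injective {n : ℕ} [NeZero n] {ζ : ℂ} (hζ : IsPrimitiveRoot ζ n) :
    Function.Injective (AddChar.zmodChar n hζ.pow_eq_one) := fun a b h =>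
  ZMod.val_injective n (hζ.pow_inj (ZMod.val_lt a) (ZMod.val_lt b) h)

theorem addChar_zmod_pow_eq_one {n : ℕ} (ψ : AddChar (ZMod n) ℂ) (a : ZMod n) : ψ a ^ n = 1 := by
  rw [← AddChar.map_nsmul_eq_pow, nsmul_eq_mul, ZMod.natCast_self, zero_mul,
    AddChar.map_zero_eq_one]

section Monomial

variable {A : Type*} [AddCommGroup A] (ψ : AddChar A ℂ)

noncomputable def monomialMatrix (σ : Perm (Fin 3)) (v : Fin 3 → A) : Matrix (Fin 3) (Fin 3) ℂ :=
  Matrix.of fun i j => if σ i = j then ψ (v i) else 0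

theorem monomialMatrix_mul (σ τ : Perm (Fin 3)) (v w : Fin 3 → A) :
    monomialMatrix ψ σ v * monomialMatrix ψ τ w = monomialMatrix ψ (τ * σ) (v + w ∘ σ) := by
  ext i k
  rw [Matrix.mul_apply, Finset.sum_eq_single (σ i)
    (fun j _ hj => by simp [monomialMatrix, Ne.symm hj]) (by simp)]
  simp [monomialMatrix, AddChar.map_add_eq_mul]

theorem monomialMatrix_one_zero : monomialMatrix ψ 1 0 = 1 := by
  ext i j
  simp [monomialMatrix, Matrix.one_apply]

theorem monomialMatrix_add_const (σ : Perm (Fin 3)) (v : Fin 3 → A) (a : A) :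
    monomialMatrix ψ σ (v + fun _ => a) = ψ a • monomialMatrix ψ σ v := by
  ext i j
  simp [monomialMatrix, AddChar.map_add_eq_mul, mul_comm]

theorem monomialMatrix_one_single_zero (a : A) :
    monomialMatrix ψ 1 (Pi.single 0 a) = !![ψ a, 0, 0; 0, 1, 0; 0, 0, 1] := by
  ext i j
  fin_cases i <;> fin_cases j <;> simp [monomialMatrix]

theorem monomialMatrix_one_single_one (a : A) :
    monomialMatrix ψ 1 (Pi.single 1 a) = !![1, 0, 0; 0, ψ a, 0; 0, 0, 1] := by
  ext i j
  fin_cases i <;> fin_cases j <;> simp [monomialMatrix]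

theorem monomialMatrix_finRotate_zero :
    monomialMatrix ψ (finRotate 3) 0 = !![0, 1, 0; 0, 0, 1; 1, 0, 0] := by
  ext i j
  fin_cases i <;> fin_cases j <;> simp [monomialMatrix]

theorem monomialMatrix_swap_zero :
    monomialMatrix ψ (swap 1 2) 0 = !![1, 0, 0; 0, 0, 1; 0, 1, 0] := by
  ext i j
  fin_cases i <;> fin_cases j <;> simp [monomialMatrix, swap_apply_def]

theorem sum_monomialMatrix_mul_X (σ : Perm (Fin 3)) (v : Fin 3 → A) (i : Fin 3) :
    ∑ j, C (monomialMatrix ψ σ v i j) * X j =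
      C (ψ (v i)) * (X (σ i) : MvPolynomial (Fin 3) ℂ) := by
  simp [monomialMatrix, apply_ite C, ite_mul]

theorem actOn_monomialMatrix_curvePoly {m : ℕ} (hψ : ∀ a, ψ a ^ m = 1) (lam : ℂ)
    (σ : Perm (Fin 3)) (v : Fin 3 → A) :
    actOn (monomialMatrix ψ σ v) (curvePoly m lam) = curvePoly m lam := by
  have hrow : ∀ i, bind₁ (fun i => ∑ j, C (monomialMatrix ψ σ v i j) * X j) (X i ^ m) =
      X (σ i) ^ m := by
    intro i
    rw [map_pow, bind₁_X_right, sum_monomialMatrix_mul_X, mul_pow, ← map_pow, hψ, map_one, one_mul]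
  rw [actOn, curvePoly_eq_bind₁, bind₁_bind₁, funext hrow]
  conv_rhs => rw [← conicPoly_isSymmetric lam σ, bind₁_rename]
  rfl

noncomputable def monomialGL (σ : Perm (Fin 3)) (v : Fin 3 → A) : GL (Fin 3) ℂ where
  val := monomialMatrix ψ σ v
  inv := monomialMatrix ψ σ⁻¹ (-(v ∘ ⇑σ⁻¹))
  val_inv := by
    rw [monomialMatrix_mul, inv_mul_cancel, ← monomialMatrix_one_zero ψ]
    congr 1
    ext i
    simp
  inv_val := by
    rw [monomialMatrix_mul, mul_inv_cancel, ← monomialMatrix_one_zero ψ]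
    congr 1
    ext i
    simp

theorem monomialGL_inv (σ : Perm (Fin 3)) (v : Fin 3 → A) :
    (monomialGL ψ σ v)⁻¹ = monomialGL ψ σ⁻¹ (-(v ∘ ⇑σ⁻¹)) :=
  Units.ext rfl

noncomputable def monomialPGL (σ : Perm (Fin 3)) (v : Fin 3 → A) : PGL3 :=
  toPGL3 (monomialGL ψ σ v)

theorem monomialPGL_mul (σ τ : Perm (Fin 3)) (v w : Fin 3 → A) :
    monomialPGL ψ σ v * monomialPGL ψ τ w = monomialPGL ψ (τ * σ) (v + w ∘ σ) := by
  rw [monomialPGL, monomialPGL, ← map_mul]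
  exact congrArg toPGL3 (Units.ext (monomialMatrix_mul ψ σ τ v w))

theorem monomialPGL_one_zero : monomialPGL ψ 1 0 = 1 := by
  rw [monomialPGL, ← map_one toPGL3]
  exact congrArg toPGL3 (Units.ext (monomialMatrix_one_zero ψ))

theorem monomialPGL_inv (σ : Perm (Fin 3)) (v : Fin 3 → A) :
    (monomialPGL ψ σ v)⁻¹ = monomialPGL ψ σ⁻¹ (-(v ∘ ⇑σ⁻¹)) := by
  rw [monomialPGL, monomialPGL, ← map_inv, monomialGL_inv]

theorem monomialPGL_one_add (v w : Fin 3 → A) :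
    monomialPGL ψ 1 (v + w) = monomialPGL ψ 1 v * monomialPGL ψ 1 w := by
  rw [monomialPGL_mul]
  rfl

theorem monomialPGL_one_nsmul (n : ℕ) (v : Fin 3 → A) :
    monomialPGL ψ 1 (n • v) = monomialPGL ψ 1 v ^ n := by
  induction n with
  | zero => rw [zero_smul, pow_zero, monomialPGL_one_zero]
  | succ n ih => rw [succ_nsmul, monomialPGL_one_add, ih, pow_succ]

theorem monomialPGL_eq_one_mul (σ : Perm (Fin 3)) (v : Fin 3 → A) :
    monomialPGL ψ σ v = monomialPGL ψ 1 v * monomialPGL ψ σ 0 := by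
  rw [monomialPGL_mul]
  simp

theorem monomialPGL_add_const (σ : Perm (Fin 3)) (v : Fin 3 → A) (a : A) :
    monomialPGL ψ σ (v + fun _ => a) = monomialPGL ψ σ v := by
  refine ((QuotientGroup.mk'_eq_mk' _).2
    ⟨GeneralLinearGroup.scalar (Fin 3) (ψ.val_isUnit a).unit, ?_, ?_⟩).symm
  · rw [GeneralLinearGroup.center_eq_range_scalar]
    exact ⟨_, rfl⟩
  · ext i j
    simp [monomialGL, monomialMatrix_add_const, mul_comm]

theorem eq_of_monomialPGL_eq {σ τ : Perm (Fin 3)} {v w : Fin 3 → A}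
    (h : monomialPGL ψ σ v = monomialPGL ψ τ w) :
    σ = τ ∧ ∃ u : ℂ, ∀ i, ψ (w i) = u * ψ (v i) := by
  obtain ⟨z, hz, hzw⟩ := (QuotientGroup.mk'_eq_mk' _).1 h
  rw [GeneralLinearGroup.center_eq_range_scalar] at hz
  obtain ⟨u, rfl⟩ := hz
  have hent : ∀ i j, (if τ i = j then ψ (w i) else 0) = u * if σ i = j then ψ (v i) else 0 := by
    intro i j
    have := congrArg (fun g : GL (Fin 3) ℂ => (g : Matrix (Fin 3) (Fin 3) ℂ) i j) hzw
    simpa [monomialGL, monomialMatrix, mul_comm] using this.symm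
  have hστ : σ = τ := Equiv.ext fun i => by
    by_contra hne
    simpa [hne, (ψ.val_isUnit (w i)).ne_zero] using hent i (τ i)
  exact ⟨hστ, u, fun i => by simpa [hστ] using hent i (τ i)⟩

theorem monomialPGL_normalized_injective (hψ : Function.Injective ψ) :
    Function.Injective fun p : Perm (Fin 3) × A × A => monomialPGL ψ p.1 ![p.2.1, p.2.2, 0] := by
  rintro ⟨σ, a, b⟩ ⟨τ, c, d⟩ h
  obtain ⟨rfl, u, hu⟩ := eq_of_monomialPGL_eq ψ h
  obtain rfl : u = 1 := by simpa using (hu 2).symm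
  obtain rfl : c = a := hψ ((hu 0).trans (one_mul _))
  obtain rfl : d = b := hψ ((hu 1).trans (one_mul _))
  rfl

def monomialPGLSubgroup : Subgroup PGL3 where
  carrier := Set.range (Function.uncurry (monomialPGL ψ))
  mul_mem' := by
    rintro _ _ ⟨⟨σ, v⟩, rfl⟩ ⟨⟨τ, w⟩, rfl⟩
    exact ⟨(τ * σ, v + w ∘ σ), (monomialPGL_mul ψ σ τ v w).symm⟩
  one_mem' := ⟨(1, 0), monomialPGL_one_zero ψ⟩
  inv_mem' := by
    rintro _ ⟨⟨σ, v⟩, rfl⟩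
    refine ⟨(σ⁻¹, -(v ∘ ⇑σ⁻¹)), ?_⟩
    exact (monomialPGL_inv ψ σ v).symm

theorem card_monomialPGLSubgroup (hψ : Function.Injective ψ) :
    Nat.card (monomialPGLSubgroup ψ) = 6 * Nat.card A ^ 2 := by
  have hrange : (monomialPGLSubgroup ψ : Set PGL3) =
      Set.range fun p : Perm (Fin 3) × A × A => monomialPGL ψ p.1 ![p.2.1, p.2.2, 0] := by
    ext x
    constructor
    · rintro ⟨⟨σ, v⟩, rfl⟩
      refine ⟨(σ, v 0 - v 2, v 1 - v 2), ?_⟩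
      change monomialPGL ψ σ _ = monomialPGL ψ σ v
      rw [← monomialPGL_add_const ψ σ _ (v 2)]
      congr 1
      ext i
      fin_cases i <;> simp
    · rintro ⟨⟨σ, a, b⟩, rfl⟩
      exact ⟨(σ, ![a, b, 0]), rfl⟩
  rw [← SetLike.coe_sort_coe, hrange,
    Nat.card_range_of_injective (monomialPGL_normalized_injective ψ hψ), Nat.card_prod,
    Nat.card_prod, Nat.card_perm, Nat.card_fin]
  ring

end Monomial

theorem closure_eq_monomialPGLSubgroup {m : ℕ} [NeZero m] (ψ : AddChar (ZMod m) ℂ) :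
    Subgroup.closure {monomialPGL ψ 1 (Pi.single 0 1), monomialPGL ψ 1 (Pi.single 1 1),
      monomialPGL ψ (finRotate 3) 0, monomialPGL ψ (swap 1 2) 0} = monomialPGLSubgroup ψ := by
  set H := Subgroup.closure {monomialPGL ψ 1 (Pi.single 0 1), monomialPGL ψ 1 (Pi.single 1 1),
      monomialPGL ψ (finRotate 3) 0, monomialPGL ψ (swap 1 2) 0}
  refine le_antisymm ((Subgroup.closure_le _).2 ?_) ?_
  · rintro _ (rfl | rfl | rfl | rfl) <;> exact ⟨(_, _), rfl⟩
  have hdiag : ∀ v, monomialPGL ψ 1 v ∈ H := by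
    intro v
    have hv : v = (v 0 - v 2).val • Pi.single 0 1 + (v 1 - v 2).val • Pi.single 1 1 +
        fun _ => v 2 := by
      ext i
      fin_cases i <;> simp [-ZMod.natCast_val, ZMod.natCast_zmod_val]
    rw [hv, monomialPGL_add_const, monomialPGL_one_add, monomialPGL_one_nsmul,
      monomialPGL_one_nsmul]
    exact mul_mem (pow_mem (Subgroup.subset_closure (by simp)) _)
      (pow_mem (Subgroup.subset_closure (by simp)) _)
  have hperm : ∀ σ, monomialPGL ψ σ 0 ∈ H := by
    intro σ
    have hgen : Subgroup.closure {finRotate 3, swap 1 (finRotate 3 1)} = ⊤ :=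
      Perm.closure_cycle_adjacent_swap isCycle_finRotate support_finRotate 1
    induction (hgen ▸ Subgroup.mem_top σ : σ ∈ Subgroup.closure _)
      using Subgroup.closure_induction with
    | mem σ hσ =>
      rcases hσ with rfl | rfl
      · exact Subgroup.subset_closure (by simp)
      · exact Subgroup.subset_closure (by simp [show finRotate 3 1 = 2 from rfl])
    | one => rw [monomialPGL_one_zero]; exact one_mem H
    | mul σ τ _ _ hσ hτ =>
      rw [show (0 : Fin 3 → ZMod m) = 0 + (0 : Fin 3 → ZMod m) ∘ ⇑τ by simp, ← monomialPGL_mul]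
      exact mul_mem hτ hσ
    | inv σ _ hσ =>
      rw [show (0 : Fin 3 → ZMod m) = -((0 : Fin 3 → ZMod m) ∘ ⇑σ⁻¹) by simp, ← monomialPGL_inv]
      exact inv_mem hσ
  rintro _ ⟨⟨σ, v⟩, rfl⟩
  change monomialPGL ψ σ v ∈ H
  rw [monomialPGL_eq_one_mul]
  exact mul_mem (hdiag v) (hperm σ)

theorem Fpp_curve_general (m : ℕ) (hm : 4 ≤ m) (d : ℕ) (hd : d = 2 * m) (lam : ℂ)
    (h1 : lam ≠ -1) (h2 : lam ≠ 2) (h3 : lam ≠ -2)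
    (ζ : ℂ) (hζ : IsPrimitiveRoot ζ d)
    (g₁ g₂ g₃ g₄ : GL (Fin 3) ℂ)
    (hg₁ : (g₁ : Matrix (Fin 3) (Fin 3) ℂ) = !![ζ ^ 2, 0, 0; 0, 1, 0; 0, 0, 1])
    (hg₂ : (g₂ : Matrix (Fin 3) (Fin 3) ℂ) = !![1, 0, 0; 0, ζ ^ 2, 0; 0, 0, 1])
    (hg₃ : (g₃ : Matrix (Fin 3) (Fin 3) ℂ) = !![0, 1, 0; 0, 0, 1; 1, 0, 0])
    (hg₄ : (g₄ : Matrix (Fin 3) (Fin 3) ℂ) = !![1, 0, 0; 0, 0, 1; 0, 1, 0]) :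
    (∀ p : Fin 3 → ℂ, p ≠ 0 →
      ∃ i : Fin 3,
        MvPolynomial.eval p (MvPolynomial.pderiv i
          (X 0 ^ (2 * m) + X 1 ^ (2 * m) + X 2 ^ (2 * m) +
            MvPolynomial.C lam *
              (X 0 ^ m * X 1 ^ m + X 1 ^ m * X 2 ^ m + X 2 ^ m * X 0 ^ m) :
            MvPolynomial (Fin 3) ℂ)) ≠ 0) ∧
    (∀ g ∈ ({g₁, g₂, g₃, g₄} : Set (GL (Fin 3) ℂ)),
      ∃ c : ℂ, c ≠ 0 ∧
        actOn (g : Matrix (Fin 3) (Fin 3) ℂ)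
            (X 0 ^ (2 * m) + X 1 ^ (2 * m) + X 2 ^ (2 * m) +
              MvPolynomial.C lam *
                (X 0 ^ m * X 1 ^ m + X 1 ^ m * X 2 ^ m + X 2 ^ m * X 0 ^ m)) =
          MvPolynomial.C c *
            (X 0 ^ (2 * m) + X 1 ^ (2 * m) + X 2 ^ (2 * m) +
              MvPolynomial.C lam *
                (X 0 ^ m * X 1 ^ m + X 1 ^ m * X 2 ^ m + X 2 ^ m * X 0 ^ m))) ∧
    Nat.card (Subgroup.closure {toPGL3 g₁, toPGL3 g₂, toPGL3 g₃, toPGL3 g₄} : Subgroup PGL3)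
      = 6 * m ^ 2 := by
  have : NeZero m := ⟨by omega⟩
  have hω : IsPrimitiveRoot (ζ ^ 2) m := hζ.pow (by omega) hd
  set ψ := AddChar.zmodChar m hω.pow_eq_one
  have hψ : ψ 1 = ζ ^ 2 := by simpa using AddChar.zmodChar_apply' hω.pow_eq_one 1
  obtain rfl : g₁ = monomialGL ψ 1 (Pi.single 0 1) :=
    Units.ext (by rw [hg₁, ← hψ]; exact (monomialMatrix_one_single_zero ψ 1).symm)
  obtain rfl : g₂ = monomialGL ψ 1 (Pi.single 1 1) :=
    Units.ext (by rw [hg₂, ← hψ]; exact (monomialMatrix_one_single_one ψ 1).symm)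
  obtain rfl : g₃ = monomialGL ψ (finRotate 3) 0 :=
    Units.ext (hg₃.trans (monomialMatrix_finRotate_zero ψ).symm)
  obtain rfl : g₄ = monomialGL ψ (Equiv.swap 1 2) 0 :=
    Units.ext (hg₄.trans (monomialMatrix_swap_zero ψ).symm)
  refine ⟨curvePoly_smooth (by omega) h1 h2 h3, ?_, ?_⟩
  · rintro g (rfl | rfl | rfl | rfl) <;>
      exact ⟨1, one_ne_zero, by
        rw [map_one, one_mul]
        exact actOn_monomialMatrix_curvePoly ψ (addChar_zmod_pow_eq_one ψ) lam _ _⟩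
  · simp only [← monomialPGL.eq_1]
    rw [closure_eq_monomialPGLSubgroup, card_monomialPGLSubgroup ψ (zmodChar_injective hω),
      Nat.card_zmod]

/-- For `d = 2m`, `m ≥ 4` and `λ ∉ {0, -1, 2, -2}`, the curve
`X^{2m} + Y^{2m} + Z^{2m} + λ(X^m Y^m + Y^m Z^m + Z^m X^m) = 0` is smooth, the group
generated by `[ζ²X, Y, Z]`, `[X, ζ²Y, Z]`, `[Y,Z,X]`, `[X,Z,Y]` (with `ζ` a primitive
`d`-th root of unity) acts on it, and that group has order `6m² = (3/2)d²`. -/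
theorem Fpp_curve (m : ℕ) (hm : 4 ≤ m) (d : ℕ) (hd : d = 2 * m) (lam : ℂ)
    (h0 : lam ≠ 0) (h1 : lam ≠ -1) (h2 : lam ≠ 2) (h3 : lam ≠ -2)
    (ζ : ℂ) (hζ : IsPrimitiveRoot ζ d)
    (g₁ g₂ g₃ g₄ : GL (Fin 3) ℂ)
    (hg₁ : (g₁ : Matrix (Fin 3) (Fin 3) ℂ) = !![ζ ^ 2, 0, 0; 0, 1, 0; 0, 0, 1])
    (hg₂ : (g₂ : Matrix (Fin 3) (Fin 3) ℂ) = !![1, 0, 0; 0, ζ ^ 2, 0; 0, 0, 1])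
    (hg₃ : (g₃ : Matrix (Fin 3) (Fin 3) ℂ) = !![0, 1, 0; 0, 0, 1; 1, 0, 0])
    (hg₄ : (g₄ : Matrix (Fin 3) (Fin 3) ℂ) = !![1, 0, 0; 0, 0, 1; 0, 1, 0]) :
    (∀ p : Fin 3 → ℂ, p ≠ 0 →
      ∃ i : Fin 3,
        MvPolynomial.eval p (MvPolynomial.pderiv i
          (X 0 ^ (2 * m) + X 1 ^ (2 * m) + X 2 ^ (2 * m) +
            MvPolynomial.C lam *
              (X 0 ^ m * X 1 ^ m + X 1 ^ m * X 2 ^ m + X 2 ^ m * X 0 ^ m) :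
            MvPolynomial (Fin 3) ℂ)) ≠ 0) ∧
    (∀ g ∈ ({g₁, g₂, g₃, g₄} : Set (GL (Fin 3) ℂ)),
      ∃ c : ℂ, c ≠ 0 ∧
        actOn (g : Matrix (Fin 3) (Fin 3) ℂ)
            (X 0 ^ (2 * m) + X 1 ^ (2 * m) + X 2 ^ (2 * m) +
              MvPolynomial.C lam *
                (X 0 ^ m * X 1 ^ m + X 1 ^ m * X 2 ^ m + X 2 ^ m * X 0 ^ m)) =
          MvPolynomial.C c *
            (X 0 ^ (2 * m) + X 1 ^ (2 * m) + X 2 ^ (2 * m) +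
              MvPolynomial.C lam *
                (X 0 ^ m * X 1 ^ m + X 1 ^ m * X 2 ^ m + X 2 ^ m * X 0 ^ m))) ∧
    Nat.card (Subgroup.closure {toPGL3 g₁, toPGL3 g₂, toPGL3 g₃, toPGL3 g₄} : Subgroup PGL3)
      = 6 * m ^ 2 :=
  Fpp_curve_general m hm d hd lam h1 h2 h3 ζ hζ g₁ g₂ g₃ g₄ hg₁ hg₂ hg₃ hg₄
end

section
/- Let d = 3m with m ≥ 2 and λ ∈ ℂ with λ ≠ 0 and λ³ ≠ 1. Then the transformations [ζ³X, Y, Z], [X, ζ³Y, Z], [ζX, ζ^{-1}Y, Z], [Y,Z,X], and [X,Z,Y] (ζ a primitive d-th root of unity) each preserve the polynomial X^{3m} + Y^{3m} + Z^{3m} − 3λ X^m Y^m Z^m up to a nonzero scalar, and they generate a subgroup of PGL(3,ℂ) of order 2d². -/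
open MvPolynomial Matrix

/-!
Every generator is a monomial matrix whose entries are `d`-th roots of unity, so the group they
generate is the image of the monomial group `(ℤ/d)³ ⋊ S₃` under `v ↦ ζ ^ v`. Substituting the
monomial matrix with exponent vector `v` into `X^{3m} + Y^{3m} + Z^{3m} - 3λ(XYZ)^m` fixes the
first three terms and multiplies the last one by `ζ^{m(v₀ + v₁ + v₂)}`, so the polynomial is
invariant as soon as `v₀ + v₁ + v₂ ≡ 0 mod 3`. The five generators generate exactly this
index-3 subgroup, of order `2d³`, and the kernel of its projection to `PGL(3, ℂ)` consists of the
`d` scalar elements `(a, a, a)`, which leaves `2d²`.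
-/

open Multiplicative MulAction

theorem Subgroup.card_map_mul_card_ker {G G' : Type*} [Group G] [Group G'] {f : G →* G'}
    {K : Subgroup G} (hK : f.ker ≤ K) :
    Nat.card (K.map f) * Nat.card f.ker = Nat.card K := by
  have hker : (f.comp K.subtype).ker = f.ker.subgroupOf K := by
    rw [Subgroup.subgroupOf, MonoidHom.comap_ker]
  have hmap : K.map f = (f.comp K.subtype).range := by
    rw [MonoidHom.range_comp, Subgroup.range_subtype]
  rw [← Nat.card_congr (Subgroup.subgroupOfEquivOfLe hK).toEquiv, ← hker, hmap,
    ← Subgroup.index_ker, mul_comm, Subgroup.card_mul_index]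

theorem mulAutArrow_apply_apply' {G A M : Type*} [Group G] [MulAction G A] [Monoid M] (g : G)
    (v : A → M) (a : A) : mulAutArrow g v a = v (g⁻¹ • a) :=
  rfl

lemma ZMod.dvd_val_of_castHom_eq_zero {d k : ℕ} [NeZero d] (h : k ∣ d) {x : ZMod d}
    (hx : ZMod.castHom h (ZMod k) x = 0) : k ∣ x.val := by
  rwa [ZMod.castHom_apply, ZMod.cast_eq_val, ZMod.natCast_eq_zero_iff] at hx

lemma ZMod.exists_eq_mul_of_castHom_eq_zero {d k : ℕ} [NeZero d] (h : k ∣ d) {x : ZMod d}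
    (hx : ZMod.castHom h (ZMod k) x = 0) : ∃ y, x = k * y := by
  obtain ⟨t, ht⟩ := ZMod.dvd_val_of_castHom_eq_zero h hx
  exact ⟨t, by rw [← ZMod.natCast_zmod_val x, ht, Nat.cast_mul]⟩

section ZModPow

variable {R : Type*} [Monoid R] {d : ℕ} [NeZero d] {ζ : R}

def zmodPowHom (hζ : ζ ^ d = 1) : Multiplicative (ZMod d) →* R where
  toFun a := ζ ^ (toAdd a).val
  map_one' := by simp
  map_mul' a b := by
    rw [toAdd_mul, ZMod.val_add, ← pow_eq_pow_mod _ hζ, pow_add]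

lemma zmodPowHom_apply (hζ : ζ ^ d = 1) (a : ZMod d) :
    zmodPowHom hζ (ofAdd a) = ζ ^ a.val :=
  rfl

lemma zmodPowHom_natCast (hζ : ζ ^ d = 1) (n : ℕ) :
    zmodPowHom hζ (ofAdd (n : ZMod d)) = ζ ^ n := by
  rw [zmodPowHom_apply, ZMod.val_natCast, ← pow_eq_pow_mod _ hζ]

lemma zmodPowHom_one (hζ : ζ ^ d = 1) : zmodPowHom hζ (ofAdd 1) = ζ := by
  simpa using zmodPowHom_natCast hζ 1

lemma zmodPowHom_pow_eq_one (hζ : ζ ^ d = 1) (a : Multiplicative (ZMod d)) :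
    zmodPowHom hζ a ^ d = 1 := by
  rw [← map_pow, ← ofAdd_toAdd (a ^ d), toAdd_pow, nsmul_eq_mul, CharP.cast_eq_zero, zero_mul,
    ofAdd_zero, map_one]

lemma zmodPowHom_injective {R : Type*} [CommMonoid R] {ζ : R} (hζ : IsPrimitiveRoot ζ d) :
    Function.Injective (zmodPowHom hζ.pow_eq_one) := fun _ _ hab =>
  toAdd.injective (ZMod.val_injective _ (hζ.pow_inj (ZMod.val_lt _) (ZMod.val_lt _) hab))

end ZModPow

abbrev MonomialGroup (ι M : Type*) [Group M] := (ι → M) ⋊[mulAutArrow] Equiv.Perm ι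

namespace MonomialGroup

section Group

variable {ι M R : Type*} [Group M]

variable (ι M) in
abbrev ofPerm : Equiv.Perm ι →* MonomialGroup ι M :=
  SemidirectProduct.inr

variable (ι M) in
def scalar : M →* MonomialGroup ι M :=
  SemidirectProduct.inl.comp (Pi.constMonoidHom ι M)

lemma scalar_injective [Nonempty ι] : Function.Injective (scalar ι M) :=
  SemidirectProduct.inl_injective.comp Function.const_injective

variable [Fintype ι]

lemma card :
    Nat.card (MonomialGroup ι M) = Nat.card M ^ Fintype.card ι * (Fintype.card ι).factorial := by
  rw [SemidirectProduct.card, Nat.card_pi, Finset.prod_const, Finset.card_univ, Nat.card_perm,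
    Nat.card_eq_fintype_card (α := ι)]

variable [DecidableEq ι]

def toMatrix [Semiring R] (χ : M →* R) : MonomialGroup ι M →* Matrix ι ι R where
  toFun x := Matrix.of fun i j => if x.right j = i then χ (x.left i) else 0
  map_one' := by
    ext i j
    by_cases h : i = j <;> simp [Matrix.one_apply, h, eq_comm]
  map_mul' x y := by
    ext i j
    rw [Matrix.mul_apply, Finset.sum_eq_single (y.right j) (fun k _ hk => by simp [Ne.symm hk])
      (by simp)]
    by_cases h : x.right (y.right j) = i
    · subst h
      simp [-mulAutArrow_apply_apply, mulAutArrow_apply_apply']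
    · simp [h]

lemma toMatrix_apply [Semiring R] (χ : M →* R) (x : MonomialGroup ι M) (i j : ι) :
    toMatrix χ x i j = if x.right j = i then χ (x.left i) else 0 :=
  rfl

def toGL [CommRing R] (χ : M →* R) : MonomialGroup ι M →* GL ι R :=
  (toMatrix χ).toHomUnits

@[simp]
lemma coe_toGL [CommRing R] (χ : M →* R) (x : MonomialGroup ι M) :
    (toGL χ x : Matrix ι ι R) = toMatrix χ x :=
  rfl

def toPGL [CommRing R] (χ : M →* R) :
    MonomialGroup ι M →* GL ι R ⧸ Subgroup.center (GL ι R) :=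
  (QuotientGroup.mk' _).comp (toGL χ)

theorem ker_toPGL [Nonempty ι] [CommRing R] [Nontrivial R] {χ : M →* R}
    (hχ : Function.Injective χ) : (toPGL χ).ker = (scalar ι M).range := by
  ext x
  simp only [toPGL, MonoidHom.mem_ker, MonoidHom.comp_apply, QuotientGroup.mk'_apply,
    QuotientGroup.eq_one_iff, Matrix.GeneralLinearGroup.mem_center_iff_val_mem_range_scalar,
    MonoidHom.mem_range, Set.mem_range, coe_toGL]
  constructor
  · rintro ⟨c, hc⟩
    have hentry : ∀ i j, toMatrix χ x i j = Matrix.scalar ι c i j := fun i j => by rw [hc]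
    have hunit : ∀ a, χ a ≠ 0 := fun a => ((Group.isUnit a).map χ).ne_zero
    have hright : x.right = 1 := by
      ext j
      by_contra hne
      have hne : x.right j ≠ j := hne
      simpa [toMatrix_apply, hunit, Matrix.diagonal_apply_ne _ hne] using hentry (x.right j) j
    have hleft : ∀ i, χ (x.left i) = c := fun i => by
      simpa [toMatrix_apply, hright] using hentry i i
    refine ⟨x.left (Classical.arbitrary ι), SemidirectProduct.ext ?_ ?_⟩
    · funext i
      exact hχ ((hleft _).trans (hleft i).symm)
    · exact hright.symm
  · rintro ⟨a, rfl⟩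
    refine ⟨χ a, ?_⟩
    ext i j
    by_cases h : i = j <;> simp [toMatrix_apply, scalar, h, eq_comm]

end Group

variable {ι : Type*} [Fintype ι]

def prodLeft {M : Type*} [CommGroup M] : MonomialGroup ι M →* M where
  toFun x := ∏ i, x.left i
  map_one' := by simp
  map_mul' x y := by
    simp [-mulAutArrow_apply_apply, mulAutArrow_apply_apply', Finset.prod_mul_distrib,
      Equiv.prod_comp]

def ofExponents {A : Type*} [AddGroup A] :
    (ι → A) →+ Additive (MonomialGroup ι (Multiplicative A)) :=
  MonoidHom.toAdditiveRight
    (SemidirectProduct.inl.comp (MulEquiv.funMultiplicative ι A).toMonoidHom)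

omit [Fintype ι] in
@[simp]
lemma toMul_ofExponents {A : Type*} [AddGroup A] (v : ι → A) :
    (ofExponents v).toMul = SemidirectProduct.inl fun i => ofAdd (v i) :=
  rfl

variable {d k : ℕ}

def exponentSumMod (k : ℕ) (h : k ∣ d) :
    MonomialGroup ι (Multiplicative (ZMod d)) →* Multiplicative (ZMod k) :=
  (ZMod.castHom h (ZMod k)).toAddMonoidHom.toMultiplicative.comp prodLeft

lemma exponentSumMod_apply (h : k ∣ d) (x : MonomialGroup ι (Multiplicative (ZMod d))) :
    exponentSumMod k h x = ofAdd (ZMod.castHom h (ZMod k) (∑ i, toAdd (x.left i))) :=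
  rfl

lemma mem_ker_exponentSumMod (h : k ∣ d) {x : MonomialGroup ι (Multiplicative (ZMod d))} :
    x ∈ (exponentSumMod k h).ker ↔ ZMod.castHom h (ZMod k) (∑ i, toAdd (x.left i)) = 0 := by
  rw [MonoidHom.mem_ker, exponentSumMod_apply, ofAdd_eq_one]

lemma card_ker_exponentSumMod_mul [Nonempty ι] [NeZero d] [NeZero k] (h : k ∣ d) :
    Nat.card (exponentSumMod (ι := ι) k h).ker * k =
      d ^ Fintype.card ι * (Fintype.card ι).factorial := by
  classical
  set K := (exponentSumMod (ι := ι) k h).ker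
  have hsurj : Function.Surjective (exponentSumMod (ι := ι) k h) := fun y =>
    ⟨SemidirectProduct.inl (Pi.mulSingle (Classical.arbitrary ι) (ofAdd (toAdd y).val)), by
      simp [exponentSumMod, prodLeft, Finset.prod_pi_mulSingle']⟩
  have hindex : K.index = k := by
    rw [Subgroup.index_ker, MonoidHom.range_eq_top.mpr hsurj, Subgroup.card_top,
      Nat.card_congr toAdd, Nat.card_zmod]
  calc Nat.card K * k = Nat.card K * K.index := by rw [hindex]
    _ = _ := by rw [Subgroup.card_mul_index, card, Nat.card_congr toAdd, Nat.card_zmod]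

lemma range_scalar_le_ker_exponentSumMod (h : k ∣ d) (hk : k ∣ Fintype.card ι) :
    (scalar ι (Multiplicative (ZMod d))).range ≤ (exponentSumMod k h).ker := by
  rintro _ ⟨a, rfl⟩
  simp [exponentSumMod, prodLeft, scalar, -ZMod.castHom_apply,
    (ZMod.natCast_eq_zero_iff _ _).mpr hk]

end MonomialGroup

open MonomialGroup

def hesseGenerators (d : ℕ) : Set (MonomialGroup (Fin 3) (Multiplicative (ZMod d))) :=
  {(ofExponents ![3, 0, 0]).toMul, (ofExponents ![0, 3, 0]).toMul,
    (ofExponents ![1, -1, 0]).toMul, ofPerm _ _ (finRotate 3)⁻¹, ofPerm _ _ (Equiv.swap 1 2)}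

section HesseGenerators

variable {d : ℕ}

lemma closure_hesseGenerators_le (h3 : 3 ∣ d) :
    Subgroup.closure (hesseGenerators d) ≤ (exponentSumMod 3 h3).ker := by
  rw [Subgroup.closure_le]
  have h3_eq_zero : ZMod.castHom h3 (ZMod 3) 3 = 0 := (map_ofNat _ 3).trans (by decide)
  rintro x (rfl | rfl | rfl | rfl | rfl) <;>
    simp [exponentSumMod, prodLeft, Fin.prod_univ_three, -ZMod.castHom_apply, h3_eq_zero]

lemma ofPerm_mem_closure_hesseGenerators (σ : Equiv.Perm (Fin 3)) :
    ofPerm _ _ σ ∈ Subgroup.closure (hesseGenerators d) := by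
  have htop : Subgroup.closure {(finRotate 3)⁻¹, Equiv.swap 1 2} = ⊤ := by
    have h := Equiv.Perm.closure_cycle_adjacent_swap (σ := (finRotate 3)⁻¹)
      isCycle_finRotate.inv (by rw [Equiv.Perm.support_inv, support_finRotate]) 2
    rwa [show ((finRotate 3)⁻¹ : Equiv.Perm (Fin 3)) 2 = 1 by decide, Equiv.swap_comm] at h
  have hσ : ofPerm _ _ σ ∈ (Subgroup.closure {(finRotate 3)⁻¹, Equiv.swap 1 2}).map
      (ofPerm (Fin 3) (Multiplicative (ZMod d))) :=
    Subgroup.mem_map_of_mem _ (htop ▸ Subgroup.mem_top σ)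
  rw [MonoidHom.map_closure] at hσ
  refine Subgroup.closure_mono ?_ hσ
  rintro _ ⟨τ, rfl | rfl, rfl⟩ <;> simp [hesseGenerators]

/- The exponent vectors `v` with `(ofExponents v).toMul` in the closure form a
`ZMod d`-submodule, so it is enough to write `v` as a `ZMod d`-combination of `(1, -1, 0)`,
its rotation `(-1, 0, 1)` and `(3, 0, 0)`. -/
lemma ofExponents_mem_closure_hesseGenerators [NeZero d] (h3 : 3 ∣ d)
    {v : Fin 3 → ZMod d} (hv : ZMod.castHom h3 (ZMod 3) (∑ i, v i) = 0) :
    (ofExponents v).toMul ∈ Subgroup.closure (hesseGenerators d) := by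
  set H := Subgroup.closure (hesseGenerators d)
  let V : Submodule (ZMod d) (Fin 3 → ZMod d) :=
    AddSubgroup.toZModSubmodule d (H.toAddSubgroup.comap ofExponents)
  have hmem : ∀ w, w ∈ V ↔ (ofExponents w).toMul ∈ H := fun _ => Iff.rfl
  have ha : ![1, -1, 0] ∈ V := (hmem _).2 (Subgroup.subset_closure (by simp [hesseGenerators]))
  have hc : ![3, 0, 0] ∈ V := (hmem _).2 (Subgroup.subset_closure (by simp [hesseGenerators]))
  have hb : ![-1, 0, 1] ∈ V := by
    have hconj : (ofExponents ![(-1 : ZMod d), 0, 1]).toMul =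
        ofPerm _ _ (finRotate 3)⁻¹ * (ofExponents ![(1 : ZMod d), -1, 0]).toMul *
          (ofPerm _ _ (finRotate 3)⁻¹)⁻¹ := by
      rw [toMul_ofExponents, toMul_ofExponents, ← map_inv, ← SemidirectProduct.inl_aut]
      congr 1
      funext i
      fin_cases i <;> rfl
    rw [hmem, hconj]
    exact H.mul_mem (H.mul_mem (ofPerm_mem_closure_hesseGenerators _) ((hmem _).1 ha))
      (H.inv_mem (ofPerm_mem_closure_hesseGenerators _))
  obtain ⟨k, hk⟩ := ZMod.exists_eq_mul_of_castHom_eq_zero h3 hv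
  rw [Fin.sum_univ_three, Nat.cast_ofNat] at hk
  have hdecomp : v = (-v 1) • ![1, -1, 0] + v 2 • ![-1, 0, 1] + k • ![3, 0, 0] := by
    ext i
    fin_cases i
    · simp only [Fin.zero_eta, Pi.add_apply, Pi.smul_apply, smul_eq_mul, Matrix.cons_val_zero]
      linear_combination hk
    all_goals simp
  rw [← hmem, hdecomp]
  exact V.add_mem (V.add_mem (V.smul_mem _ ha) (V.smul_mem _ hb)) (V.smul_mem _ hc)

theorem closure_hesseGenerators [NeZero d] (h3 : 3 ∣ d) :
    Subgroup.closure (hesseGenerators d) = (exponentSumMod 3 h3).ker := by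
  refine le_antisymm (closure_hesseGenerators_le h3) fun x hx => ?_
  rw [← SemidirectProduct.inl_left_mul_inr_right x]
  refine Subgroup.mul_mem _ ?_ (ofPerm_mem_closure_hesseGenerators _)
  exact ofExponents_mem_closure_hesseGenerators h3 ((mem_ker_exponentSumMod h3).1 hx)

lemma image_toMatrix_hesseGenerators [NeZero d] {ζ : ℂ} (hζ : ζ ^ d = 1) :
    toMatrix (zmodPowHom hζ) '' hesseGenerators d =
      {!![ζ ^ 3, 0, 0; 0, 1, 0; 0, 0, 1], !![1, 0, 0; 0, ζ ^ 3, 0; 0, 0, 1],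
        !![ζ, 0, 0; 0, ζ⁻¹, 0; 0, 0, 1], !![0, 1, 0; 0, 0, 1; 1, 0, 0],
        !![1, 0, 0; 0, 0, 1; 0, 1, 0]} := by
  have hpow3 : zmodPowHom hζ (ofAdd 3) = ζ ^ 3 := by exact_mod_cast zmodPowHom_natCast hζ 3
  simp only [hesseGenerators, Set.image_insert_eq, Set.image_singleton]
  refine congrArg₂ _ ?_ (congrArg₂ _ ?_ (congrArg₂ _ ?_ (congrArg₂ _ ?_ (congrArg _ ?_)))) <;>
    ext i j <;> fin_cases i <;> fin_cases j <;>
    simp [toMatrix_apply, hpow3, zmodPowHom_one] <;> decide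

theorem card_map_toPGL_ker_exponentSumMod [NeZero d] (h3 : 3 ∣ d) {ζ : ℂ}
    (hζ : IsPrimitiveRoot ζ d) :
    Nat.card ((exponentSumMod (ι := Fin 3) 3 h3).ker.map (toPGL (zmodPowHom hζ.pow_eq_one))) =
      2 * d ^ 2 := by
  have hker := ker_toPGL (ι := Fin 3) (zmodPowHom_injective hζ)
  have hmap := Subgroup.card_map_mul_card_ker
    (hker ▸ range_scalar_le_ker_exponentSumMod h3 (by simp))
  have hscalar : Nat.card (scalar (Fin 3) (Multiplicative (ZMod d))).range = d := by
    rw [← Nat.card_congr (MonoidHom.ofInjective scalar_injective).toEquiv,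
      Nat.card_congr toAdd, Nat.card_zmod]
  have hK := card_ker_exponentSumMod_mul (ι := Fin 3) h3
  rw [hker, hscalar] at hmap
  have hd : 0 < d := Nat.pos_of_ne_zero (NeZero.ne d)
  refine Nat.eq_of_mul_eq_mul_right (Nat.mul_pos hd three_pos) ?_
  rw [← mul_assoc, hmap, hK]
  simp only [Fintype.card_fin, Nat.factorial]
  ring

end HesseGenerators

noncomputable def hessePolynomial (m : ℕ) (lam : ℂ) : MvPolynomial (Fin 3) ℂ :=
  X 0 ^ (3 * m) + X 1 ^ (3 * m) + X 2 ^ (3 * m) - C (3 * lam) * (X 0 ^ m * X 1 ^ m * X 2 ^ m)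

lemma hessePolynomial_eq (m : ℕ) (lam : ℂ) :
    hessePolynomial m lam = ∑ i, X i ^ (3 * m) - C (3 * lam) * ∏ i, X i ^ m := by
  rw [hessePolynomial, Fin.sum_univ_three, Fin.prod_univ_three]

lemma actOn_toMatrix {M : Type*} [Group M] (χ : M →* ℂ) (x : MonomialGroup (Fin 3) M)
    (F : MvPolynomial (Fin 3) ℂ) :
    actOn (toMatrix χ x) F = bind₁ (fun i => C (χ (x.left i)) * X (x.right⁻¹ i)) F := by
  unfold actOn
  congr 2 with i
  rw [Finset.sum_eq_single (x.right⁻¹ i)]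
  · simp [toMatrix_apply]
  · intro j _ hj
    have hj : x.right j ≠ i := fun h => hj (by simp [← h])
    simp [toMatrix_apply, hj]
  · simp

theorem actOn_hessePolynomial {m d : ℕ} [NeZero d] (hd : d = 3 * m) {ζ : ℂ} (hζ : ζ ^ d = 1)
    (lam : ℂ) {x : MonomialGroup (Fin 3) (Multiplicative (ZMod d))}
    (hx : x ∈ (exponentSumMod 3 ⟨m, hd⟩).ker) :
    actOn (toMatrix (zmodPowHom hζ) x) (hessePolynomial m lam) = hessePolynomial m lam := by
  have hpow : ∀ i, (C (zmodPowHom hζ (x.left i)) : MvPolynomial (Fin 3) ℂ) ^ (3 * m) = 1 :=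
    fun i => by rw [← map_pow, ← hd, zmodPowHom_pow_eq_one, map_one]
  have hprod : zmodPowHom hζ (∏ i, x.left i) ^ m = 1 := by
    obtain ⟨t, ht⟩ := ZMod.dvd_val_of_castHom_eq_zero ⟨m, hd⟩ ((mem_ker_exponentSumMod _).1 hx)
    rw [← ofAdd_toAdd (∏ i, x.left i), toAdd_prod, zmodPowHom_apply, ht, ← pow_mul,
      mul_right_comm, pow_mul, ← hd, hζ, one_pow]
  rw [actOn_toMatrix, hessePolynomial_eq]
  simp only [map_sub, map_sum, map_mul, map_prod, map_pow, bind₁_X_right, bind₁_C_right, mul_pow,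
    Finset.prod_mul_distrib]
  rw [Finset.prod_pow, ← map_prod, ← map_prod, ← map_pow, hprod, map_one, one_mul]
  simp only [hpow, one_mul]
  rw [Equiv.sum_comp x.right⁻¹ (fun i => X i ^ (3 * m)),
    Equiv.prod_comp x.right⁻¹ (fun i => X i ^ m)]

theorem Fp_curve_general (m : ℕ) (hm : 2 ≤ m) (d : ℕ) (hd : d = 3 * m) (lam : ℂ)
    (ζ : ℂ) (hζ : IsPrimitiveRoot ζ d)
    (g₁ g₂ g₃ g₄ g₅ : GL (Fin 3) ℂ)
    (hg₁ : (g₁ : Matrix (Fin 3) (Fin 3) ℂ) = !![ζ ^ 3, 0, 0; 0, 1, 0; 0, 0, 1])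
    (hg₂ : (g₂ : Matrix (Fin 3) (Fin 3) ℂ) = !![1, 0, 0; 0, ζ ^ 3, 0; 0, 0, 1])
    (hg₃ : (g₃ : Matrix (Fin 3) (Fin 3) ℂ) = !![ζ, 0, 0; 0, ζ⁻¹, 0; 0, 0, 1])
    (hg₄ : (g₄ : Matrix (Fin 3) (Fin 3) ℂ) = !![0, 1, 0; 0, 0, 1; 1, 0, 0])
    (hg₅ : (g₅ : Matrix (Fin 3) (Fin 3) ℂ) = !![1, 0, 0; 0, 0, 1; 0, 1, 0]) :
    (∀ g ∈ ({g₁, g₂, g₃, g₄, g₅} : Set (GL (Fin 3) ℂ)),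
      ∃ c : ℂ, c ≠ 0 ∧
        actOn (g : Matrix (Fin 3) (Fin 3) ℂ)
            (X 0 ^ (3 * m) + X 1 ^ (3 * m) + X 2 ^ (3 * m) -
              MvPolynomial.C (3 * lam) * (X 0 ^ m * X 1 ^ m * X 2 ^ m)) =
          MvPolynomial.C c *
            (X 0 ^ (3 * m) + X 1 ^ (3 * m) + X 2 ^ (3 * m) -
              MvPolynomial.C (3 * lam) * (X 0 ^ m * X 1 ^ m * X 2 ^ m))) ∧
    Nat.card
        (Subgroup.closure {toPGL3 g₁, toPGL3 g₂, toPGL3 g₃, toPGL3 g₄, toPGL3 g₅} :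
          Subgroup PGL3) = 2 * d ^ 2 := by
  have : NeZero d := ⟨by omega⟩
  have h3 : 3 ∣ d := ⟨m, hd⟩
  have hgens : ({g₁, g₂, g₃, g₄, g₅} : Set (GL (Fin 3) ℂ)) =
      toGL (zmodPowHom hζ.pow_eq_one) '' hesseGenerators d := by
    refine Set.image_injective.mpr Units.val_injective ?_
    simp only [Set.image_insert_eq, Set.image_singleton, hg₁, hg₂, hg₃, hg₄, hg₅, Set.image_image,
      coe_toGL, image_toMatrix_hesseGenerators]
  refine ⟨?_, ?_⟩
  · rw [hgens]
    rintro _ ⟨x, hx, rfl⟩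
    refine ⟨1, one_ne_zero, ?_⟩
    rw [map_one, one_mul]
    exact actOn_hessePolynomial hd _ lam (closure_hesseGenerators h3 ▸ Subgroup.subset_closure hx)
  · have himage : ({toPGL3 g₁, toPGL3 g₂, toPGL3 g₃, toPGL3 g₄, toPGL3 g₅} : Set PGL3) =
        toPGL3 '' {g₁, g₂, g₃, g₄, g₅} := by
      simp only [Set.image_insert_eq, Set.image_singleton]
    rw [himage, hgens, ← Set.image_comp, ← MonoidHom.coe_comp, ← MonoidHom.map_closure,
      closure_hesseGenerators h3]
    exact card_map_toPGL_ker_exponentSumMod h3 hζ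

/-- For `d = 3m`, `m ≥ 2`, `λ ≠ 0` with `λ³ ≠ 1`, the transformations `[ζ³X, Y, Z]`,
`[X, ζ³Y, Z]`, `[ζX, ζ⁻¹Y, Z]`, `[Y,Z,X]`, `[X,Z,Y]` (with `ζ` a primitive `d`-th root of
unity) each preserve `X^{3m} + Y^{3m} + Z^{3m} - 3λX^mY^mZ^m` up to a nonzero scalar, and
they generate a subgroup of `PGL(3,ℂ)` of order `2d²`. -/
theorem Fp_curve (m : ℕ) (hm : 2 ≤ m) (d : ℕ) (hd : d = 3 * m) (lam : ℂ)
    (h0 : lam ≠ 0) (h1 : lam ^ 3 ≠ 1)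
    (ζ : ℂ) (hζ : IsPrimitiveRoot ζ d)
    (g₁ g₂ g₃ g₄ g₅ : GL (Fin 3) ℂ)
    (hg₁ : (g₁ : Matrix (Fin 3) (Fin 3) ℂ) = !![ζ ^ 3, 0, 0; 0, 1, 0; 0, 0, 1])
    (hg₂ : (g₂ : Matrix (Fin 3) (Fin 3) ℂ) = !![1, 0, 0; 0, ζ ^ 3, 0; 0, 0, 1])
    (hg₃ : (g₃ : Matrix (Fin 3) (Fin 3) ℂ) = !![ζ, 0, 0; 0, ζ⁻¹, 0; 0, 0, 1])
    (hg₄ : (g₄ : Matrix (Fin 3) (Fin 3) ℂ) = !![0, 1, 0; 0, 0, 1; 1, 0, 0])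
    (hg₅ : (g₅ : Matrix (Fin 3) (Fin 3) ℂ) = !![1, 0, 0; 0, 0, 1; 0, 1, 0]) :
    (∀ g ∈ ({g₁, g₂, g₃, g₄, g₅} : Set (GL (Fin 3) ℂ)),
      ∃ c : ℂ, c ≠ 0 ∧
        actOn (g : Matrix (Fin 3) (Fin 3) ℂ)
            (X 0 ^ (3 * m) + X 1 ^ (3 * m) + X 2 ^ (3 * m) -
              MvPolynomial.C (3 * lam) * (X 0 ^ m * X 1 ^ m * X 2 ^ m)) =
          MvPolynomial.C c *
            (X 0 ^ (3 * m) + X 1 ^ (3 * m) + X 2 ^ (3 * m) -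
              MvPolynomial.C (3 * lam) * (X 0 ^ m * X 1 ^ m * X 2 ^ m))) ∧
    Nat.card
        (Subgroup.closure {toPGL3 g₁, toPGL3 g₂, toPGL3 g₃, toPGL3 g₄, toPGL3 g₅} :
          Subgroup PGL3) = 2 * d ^ 2 :=
  Fp_curve_general m hm d hd lam ζ hζ g₁ g₂ g₃ g₄ g₅ hg₁ hg₂ hg₃ hg₄ hg₅
end
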